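/- Let a, b, c be real numbers with c not an integer, and let x be a real number with |x| < 1. Then ₂F₁(a, b; c; x) · ₂F₁(1−a, 1−b; 2−c; x) − ₂F₁(c−a, c−b; c; x) · ₂F₁(1+a−c, 1+b−c; 2−c; x) = 0. -/
import Mathlib


open Finset

/-- Pochhammer symbol `(a)ₙ = a(a+1)⋯(a+n-1)` for natural `n`. -/
noncomputable def poch (a : ℝ) (n : ℕ) : ℝ := Polynomial.eval a (ascPochhammer ℝ n)

/-- The Gauss hypergeometric series `₂F₁(a,b;c;x)`. -/
noncomputable def F21 (a b c x : ℝ) : ℝ :=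
  ∑' n : ℕ, poch a n * poch b n * x ^ n / (poch c n * n.factorial)

open Filter Topology

lemma poch_zero (a : ℝ) : poch a 0 = 1 := by simp [poch]

lemma poch_succ (a : ℝ) (n : ℕ) : poch a (n + 1) = poch a n * (a + n) := by
  simp [poch, ascPochhammer_succ_eval]

lemma poch_one_ne (n : ℕ) : poch (1 : ℝ) n ≠ 0 := by
  induction n with
  | zero => simp [poch_zero]
  | succ m ih =>
    rw [poch_succ]
    exact mul_ne_zero ih (by positivity)

lemma poch_zero_eq (n : ℕ) (hn : n ≠ 0) : poch (0 : ℝ) n = 0 := by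
  simp [poch, ascPochhammer_eval_zero, hn]

lemma poch_ne_zero_of_nonint {c : ℝ} (hc : ∀ k : ℤ, c ≠ (k : ℝ)) (n : ℕ) : poch c n ≠ 0 := by
  induction n with
  | zero => simp [poch_zero]
  | succ m ih =>
    rw [poch_succ]
    refine mul_ne_zero ih fun h => ?_
    have := hc (-(m : ℤ))
    push_cast at this
    apply this
    linarith

lemma add_nat_ne_zero_of_poch {c : ℝ} (hpc : ∀ n, poch c n ≠ 0) (n : ℕ) : c + n ≠ 0 := by
  have := hpc (n + 1)
  rw [poch_succ] at this
  exact right_ne_zero_of_mul this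

/-- guarded Pfaff–Saalschütz summand -/
noncomputable def Tg (a b c : ℝ) (m k : ℕ) : ℝ :=
  if k ≤ m then
    poch a k * poch b k * poch (c - a - b) (m - k) /
      (poch c k * k.factorial * (m - k).factorial)
  else 0

noncomputable def Sps (a b c : ℝ) (m : ℕ) : ℝ := ∑ k ∈ range (m + 1), Tg a b c m k

lemma cert (a b c : ℝ) (hpc : ∀ n, poch c n ≠ 0) (n k : ℕ) :
    ((n : ℝ) + 1) * (c + n) * Tg a b c (n + 1) k -
      (c - a + n) * (c - b + n) * Tg a b c n k =
    (k : ℝ) * (c + k - 1) * Tg a b c (n + 1) k -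
      ((k : ℝ) + 1) * (c + k) * Tg a b c (n + 1) (k + 1) := by
  rcases le_or_gt k n with hk | hk
  · -- main case
    obtain ⟨j, rfl⟩ : ∃ j, n = k + j := ⟨n - k, by omega⟩
    have e1 : k + j + 1 - k = j + 1 := by omega
    have e2 : k + j - k = j := by omega
    have e3 : k + j + 1 - (k + 1) = j := by omega
    rw [Tg, Tg, Tg, if_pos (by omega), if_pos (by omega), if_pos (by omega), e1, e2, e3]
    rw [poch_succ a, poch_succ b, poch_succ c, poch_succ (c - a - b), Nat.factorial_succ,
      Nat.factorial_succ]
    have h1 : poch c k ≠ 0 := hpc k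
    have h2 : c + (k : ℝ) ≠ 0 := add_nat_ne_zero_of_poch hpc k
    have h3 : (k.factorial : ℝ) ≠ 0 := Nat.cast_ne_zero.mpr k.factorial_ne_zero
    have h4 : (j.factorial : ℝ) ≠ 0 := Nat.cast_ne_zero.mpr j.factorial_ne_zero
    have h5 : ((k : ℝ) + 1) ≠ 0 := by positivity
    have h6 : ((j : ℝ) + 1) ≠ 0 := by positivity
    push_cast
    field_simp
    ring
  · rcases Nat.eq_or_lt_of_le hk with hk' | hk'
    · -- k = n + 1
      subst hk'
      rw [Tg, Tg, Tg, if_pos le_rfl, if_neg (by omega), if_neg (by omega)]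
      push_cast
      ring
    · -- k ≥ n + 2
      rw [Tg, Tg, Tg, if_neg (by omega), if_neg (by omega), if_neg (by omega)]
      ring

lemma Sps_rec (a b c : ℝ) (hpc : ∀ n, poch c n ≠ 0) (n : ℕ) :
    ((n : ℝ) + 1) * (c + n) * Sps a b c (n + 1) =
      (c - a + n) * (c - b + n) * Sps a b c n := by
  have hS1 : Sps a b c (n + 1) = ∑ k ∈ range (n + 2), Tg a b c (n + 1) k := rfl
  have hS0 : ∑ k ∈ range (n + 2), Tg a b c n k = Sps a b c n := by
    rw [sum_range_succ, Sps, Tg, if_neg (by omega), add_zero]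
  have key : ∑ k ∈ range (n + 2),
      (((n : ℝ) + 1) * (c + n) * Tg a b c (n + 1) k -
        (c - a + n) * (c - b + n) * Tg a b c n k) =
      ∑ k ∈ range (n + 2),
      ((fun k : ℕ => (k : ℝ) * (c + k - 1) * Tg a b c (n + 1) k) k -
        (fun k : ℕ => (k : ℝ) * (c + k - 1) * Tg a b c (n + 1) k) (k + 1)) := by
    refine sum_congr rfl fun k _ => ?_
    have := cert a b c hpc n k
    simp only []
    push_cast
    linarith [this]
  rw [sum_range_sub'] at key
  rw [sum_sub_distrib, ← mul_sum, ← mul_sum, hS0, ← hS1] at key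
  have gt : Tg a b c (n + 1) (n + 2) = 0 := by rw [Tg, if_neg (by omega)]
  simp only [gt, mul_zero, Nat.cast_zero, zero_mul, sub_zero] at key
  linarith [key]

lemma Sps_closed (a b c : ℝ) (hpc : ∀ n, poch c n ≠ 0) :
    ∀ n, Sps a b c n = poch (c - a) n * poch (c - b) n / (poch c n * n.factorial) := by
  intro n
  induction n with
  | zero =>
    simp [Sps, Tg, poch_zero]
  | succ m ih =>
    have hrec := Sps_rec a b c hpc m
    rw [ih] at hrec
    have h1 : ((m : ℝ) + 1) * (c + m) ≠ 0 :=
      mul_ne_zero (by positivity) (add_nat_ne_zero_of_poch hpc m)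
    have h2 : poch c m ≠ 0 := hpc m
    have h3 : ((m.factorial : ℝ)) ≠ 0 := Nat.cast_ne_zero.mpr m.factorial_ne_zero
    have hgoal : ((m : ℝ) + 1) * (c + m) *
        (poch (c - a) (m + 1) * poch (c - b) (m + 1) / (poch c (m + 1) * (m + 1).factorial)) =
        (c - a + m) * (c - b + m) *
          (poch (c - a) m * poch (c - b) m / (poch c m * m.factorial)) := by
      rw [poch_succ, poch_succ, poch_succ, Nat.factorial_succ]
      have h4 : c + (m : ℝ) ≠ 0 := add_nat_ne_zero_of_poch hpc m
      push_cast
      field_simp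
    rw [← hgoal] at hrec
    exact mul_left_cancel₀ h1 hrec

lemma summable_norm_F (a b c x : ℝ) (hpc : ∀ n, poch c n ≠ 0) (hx : |x| < 1) :
    Summable fun n : ℕ => ‖poch a n * poch b n * x ^ n / (poch c n * n.factorial)‖ := by
  set f : ℕ → ℝ := fun n => poch a n * poch b n * x ^ n / (poch c n * n.factorial) with hf
  have hcn : ∀ n : ℕ, c + (n : ℝ) ≠ 0 := add_nat_ne_zero_of_poch hpc
  have hstep : ∀ n : ℕ, f (n + 1) = f n * (x * ((a + n) / (c + n)) * ((b + n) / ((n : ℝ) + 1))) := by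
    intro n
    have h3 : ((n.factorial : ℝ)) ≠ 0 := Nat.cast_ne_zero.mpr n.factorial_ne_zero
    have h5 : ((n : ℝ) + 1) ≠ 0 := by positivity
    simp only [hf]
    rw [poch_succ, poch_succ, poch_succ, Nat.factorial_succ]
    push_cast
    field_simp
    ring
  set q : ℕ → ℝ := fun n => |x * ((a + n) / (c + n)) * ((b + n) / ((n : ℝ) + 1))| with hq
  have hqt : Tendsto q atTop (𝓝 |x|) := by
    have hd1 : Tendsto (fun n : ℕ => c + (n : ℝ)) atTop atTop :=
      tendsto_atTop_add_const_left _ c tendsto_natCast_atTop_atTop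
    have hd2 : Tendsto (fun n : ℕ => (n : ℝ) + 1) atTop atTop :=
      tendsto_atTop_add_const_right _ 1 tendsto_natCast_atTop_atTop
    have h1 : Tendsto (fun n : ℕ => (a + n) / (c + n)) atTop (𝓝 1) := by
      have h0 : Tendsto (fun n : ℕ => 1 + (a - c) / (c + n)) atTop (𝓝 (1 + 0)) :=
        tendsto_const_nhds.add (Tendsto.div_atTop tendsto_const_nhds hd1)
      rw [add_zero] at h0
      refine h0.congr fun n => ?_
      field_simp [hcn n]
      ring
    have h2 : Tendsto (fun n : ℕ => (b + n) / ((n : ℝ) + 1)) atTop (𝓝 1) := by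
      have h0 : Tendsto (fun n : ℕ => 1 + (b - 1) / ((n : ℝ) + 1)) atTop (𝓝 (1 + 0)) :=
        tendsto_const_nhds.add (Tendsto.div_atTop tendsto_const_nhds hd2)
      rw [add_zero] at h0
      refine h0.congr fun n => ?_
      have h5 : ((n : ℝ) + 1) ≠ 0 := by positivity
      field_simp
      ring
    have := ((tendsto_const_nhds (x := x) (f := atTop (α := ℕ))).mul h1).mul h2
    rw [mul_one, mul_one] at this
    exact this.abs
  set r : ℝ := (1 + |x|) / 2 with hr
  have hxr : |x| < r := by rw [hr]; linarith
  have hr1 : r < 1 := by rw [hr]; linarith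
  have hev : ∀ᶠ n in atTop, q n < r := hqt.eventually_lt_const hxr
  refine summable_of_ratio_norm_eventually_le hr1 ?_
  filter_upwards [hev] with n hn
  have hthis : ‖f (n + 1)‖ = q n * ‖f n‖ := by
    rw [hstep n, norm_mul, mul_comm]
    rfl
  simp only [norm_norm]
  rw [hthis]
  exact mul_le_mul_of_nonneg_right hn.le (norm_nonneg _)

lemma F21_b_zero (u w x : ℝ) : F21 u 0 w x = 1 := by
  rw [F21]
  rw [tsum_eq_single 0 ?_]
  · simp [poch_zero, Nat.factorial_zero]
  · intro n hn
    rw [poch_zero_eq n hn]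
    simp

lemma euler (a b c x : ℝ) (hpc : ∀ n, poch c n ≠ 0) (hx : |x| < 1) :
    F21 a b c x * F21 (c - a - b) 1 1 x = F21 (c - a) (c - b) c x := by
  have h1 : ∀ n, poch (1 : ℝ) n ≠ 0 := poch_one_ne
  have hf := summable_norm_F a b c x hpc hx
  have hg := summable_norm_F (c - a - b) 1 1 x h1 hx
  rw [F21, F21, tsum_mul_tsum_eq_tsum_sum_antidiagonal_of_summable_norm hf hg, F21]
  refine tsum_congr fun n => ?_
  rw [Finset.Nat.sum_antidiagonal_eq_sum_range_succ_mk]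
  have key : ∑ k ∈ range (n + 1),
      (poch a k * poch b k * x ^ k / (poch c k * k.factorial)) *
        (poch (c - a - b) (n - k) * poch 1 (n - k) * x ^ (n - k) /
          (poch 1 (n - k) * (n - k).factorial)) = x ^ n * Sps a b c n := by
    rw [Sps, mul_sum]
    refine sum_congr rfl fun k hk => ?_
    have hkn : k ≤ n := by simpa using Nat.lt_succ_iff.mp (mem_range.mp hk)
    rw [Tg, if_pos hkn]
    have hxp : x ^ k * x ^ (n - k) = x ^ n := by
      rw [← pow_add]
      congr 1
      omega
    have h1' : poch (1 : ℝ) (n - k) ≠ 0 := poch_one_ne (n - k)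
    rw [show poch (c - a - b) (n - k) * poch 1 (n - k) * x ^ (n - k) /
          (poch 1 (n - k) * (n - k).factorial) =
        poch 1 (n - k) * (poch (c - a - b) (n - k) * x ^ (n - k)) /
          (poch 1 (n - k) * (n - k).factorial) by ring,
      mul_div_mul_left _ _ h1', div_mul_div_comm, ← hxp]
    ring
  rw [key, Sps_closed a b c hpc n]
  ring

theorem Gauss_product_identity (a b c x : ℝ)
    (hc : ∀ k : ℤ, c ≠ (k : ℝ)) (hx : |x| < 1) :
    F21 a b c x * F21 (1 - a) (1 - b) (2 - c) x -
      F21 (c - a) (c - b) c x * F21 (1 + a - c) (1 + b - c) (2 - c) x = 0 := by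
  have hpc := poch_ne_zero_of_nonint hc
  have h2c : ∀ k : ℤ, (2 - c) ≠ (k : ℝ) := by
    intro k h
    exact hc (2 - k) (by push_cast; linarith)
  have hp2c := poch_ne_zero_of_nonint h2c
  have h1 : ∀ n, poch (1 : ℝ) n ≠ 0 := poch_one_ne
  have E1 := euler a b c x hpc hx
  have E2 := euler (1 - a) (1 - b) (2 - c) x hp2c hx
  have E3 := euler (c - a - b) 1 1 x h1 hx
  rw [show (2 - c) - (1 - a) - (1 - b) = a + b - c by ring,
    show (2 - c) - (1 - a) = 1 + a - c by ring,
    show (2 - c) - (1 - b) = 1 + b - c by ring] at E2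
  rw [show (1 : ℝ) - (c - a - b) - 1 = a + b - c by ring,
    show (1 : ℝ) - 1 = 0 by norm_num, F21_b_zero] at E3
  rw [← E1, ← E2]
  linear_combination (-(F21 a b c x * F21 (1 - a) (1 - b) (2 - c) x)) * E3
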